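/- Let p ≥ 0 be real and let (A_N), (B_N) be real sequences with A_N/N² → A₂ ∈ ℝ and B_N/N → B₁ > 0. If −A₂/B₁² > max(p, 1), then lim_{N→∞} J_p(A_N, B_N) · e^{−f_N(1)} = 1, where f_N(k) = k A_N + k² B_N²/2. (Equivalently, J_p(A_N,B_N) ≈ e^{f_N(1)} G(−A_N/B_N − B_N) at leading order, the argument of G tending to +∞.) -/

import Mathlib

open MeasureTheory Real Filter

/-- The standard Gaussian density `φ(v) = e^{-v²/2}/√(2π)` on `ℝ`. -/
noncomputable def gaussPDF (v : ℝ) : ℝ := Real.exp (-v ^ 2 / 2) / Real.sqrt (2 * Real.pi)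

/-- `J_p(A,B) = ∫_ℝ φ(v) (1 + e^{A+Bv})^p log(1 + e^{A+Bv}) dv`. -/
noncomputable def Jint (p A B : ℝ) : ℝ :=
  ∫ v : ℝ, gaussPDF v * (1 + Real.exp (A + B * v)) ^ p * Real.log (1 + Real.exp (A + B * v))

/-- `f_N(k) = k A_N + k² B_N²/2`. -/
noncomputable def fExp (A B k : ℝ) : ℝ := k * A + k ^ 2 * B ^ 2 / 2
/-!
Split the integral at the point `T = -A/B` where `A + B v` changes sign. For `v ≤ T` put
`t = e^{A+Bv} ≤ 1`: the integrand lies between `φ (t - t²)` and `φ (t + (e^p - 1) t²)`, and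
completing the square, `φ(v) e^{k(A+Bv)} = e^{f(k)} φ(v - kB)`, turns this piece into
`e^{f(1)} G(T - B) + O(e^{f(k)})` for any `k ∈ (1, 2]`. For `v > T` the integrand is
`O(φ e^{q(A+Bv)})` with `p < q < -A₂/B₁²`, and the Gaussian tail bound makes this piece
`O(e^{f(1) - (T-B)²/2})`. Normalised by `e^{f(1)}`, everything is squeezed to `1`: `T - B` grows
linearly in `N`, so `G(T - B) → 1`, while `f(k) - f(1) → -∞` once `(k + 1)/2 < -A₂/B₁²`.
-/

open Set ProbabilityTheory

lemma gaussPDF_eq_gaussianPDFReal : gaussPDF = gaussianPDFReal 0 1 := by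
  ext v
  simp only [gaussPDF, gaussianPDFReal, NNReal.coe_one, mul_one, sub_zero]
  ring

lemma gaussPDF_nonneg (v : ℝ) : 0 ≤ gaussPDF v := by
  rw [gaussPDF_eq_gaussianPDFReal]
  exact gaussianPDFReal_nonneg 0 1 v

lemma gaussPDF_neg (v : ℝ) : gaussPDF (-v) = gaussPDF v := by
  simp only [gaussPDF, neg_sq]

lemma integrable_gaussPDF : Integrable gaussPDF := by
  rw [gaussPDF_eq_gaussianPDFReal]
  exact integrable_gaussianPDFReal 0 1

lemma integral_gaussPDF : ∫ v, gaussPDF v = 1 := by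
  rw [gaussPDF_eq_gaussianPDFReal]
  exact integral_gaussianPDFReal_eq_one 0 one_ne_zero

/-- The standard normal CDF `G`. -/
noncomputable def gaussCDF (u : ℝ) : ℝ := ∫ v in Iic u, gaussPDF v

lemma gaussCDF_add_integral_Ioi (u : ℝ) : gaussCDF u + ∫ v in Ioi u, gaussPDF v = 1 :=
  (intervalIntegral.integral_Iic_add_Ioi integrable_gaussPDF.integrableOn
    integrable_gaussPDF.integrableOn).trans integral_gaussPDF

lemma gaussCDF_le_one (u : ℝ) : gaussCDF u ≤ 1 := by
  have : 0 ≤ ∫ v in Ioi u, gaussPDF v :=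
    setIntegral_nonneg measurableSet_Ioi fun v _ => gaussPDF_nonneg v
  linarith [gaussCDF_add_integral_Ioi u]

lemma setIntegral_comp_sub_right (f : ℝ → ℝ) (m : ℝ) (s : Set ℝ) :
    ∫ v in (· - m) ⁻¹' s, f (v - m) = ∫ v in s, f v :=
  (measurePreserving_sub_right volume m).setIntegral_preimage_emb
    (measurableEmbedding_subRight m) f s

lemma gaussPDF_mul_exp (a b k v : ℝ) :
    gaussPDF v * exp (k * (a + b * v)) = exp (fExp a b k) * gaussPDF (v - k * b) := by
  simp only [gaussPDF, fExp, mul_div_assoc', ← exp_add, div_mul_eq_mul_div]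
  congr 2
  ring

lemma integrable_gaussPDF_mul_exp (a b k : ℝ) :
    Integrable fun v => gaussPDF v * exp (k * (a + b * v)) := by
  simp only [gaussPDF_mul_exp]
  exact (integrable_gaussPDF.comp_sub_right (k * b)).const_mul _

lemma integral_gaussPDF_mul_exp (a b k : ℝ) :
    ∫ v, gaussPDF v * exp (k * (a + b * v)) = exp (fExp a b k) := by
  simp only [gaussPDF_mul_exp, integral_const_mul,
    integral_sub_right_eq_self gaussPDF, integral_gaussPDF, mul_one]

lemma setIntegral_Iic_gaussPDF_mul_exp (a b k T : ℝ) :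
    ∫ v in Iic T, gaussPDF v * exp (k * (a + b * v)) =
      exp (fExp a b k) * gaussCDF (T - k * b) := by
  simp only [gaussPDF_mul_exp, integral_const_mul, gaussCDF,
    ← setIntegral_comp_sub_right gaussPDF (k * b), preimage_sub_const_Iic, sub_add_cancel]

lemma setIntegral_Ioi_gaussPDF_mul_exp (a b k T : ℝ) :
    ∫ v in Ioi T, gaussPDF v * exp (k * (a + b * v)) =
      exp (fExp a b k) * ∫ v in Ioi (T - k * b), gaussPDF v := by
  simp only [gaussPDF_mul_exp, integral_const_mul,
    ← setIntegral_comp_sub_right gaussPDF (k * b), preimage_sub_const_Ioi, sub_add_cancel]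

/-- Chernoff's bound for the lower Gaussian tail. -/
lemma gaussCDF_le_exp {u : ℝ} (hu : u ≤ 0) : gaussCDF u ≤ exp (-u ^ 2 / 2) := by
  have hexp : fExp (-u ^ 2) u 1 = -u ^ 2 / 2 := by simp only [fExp]; ring
  calc gaussCDF u ≤ ∫ v in Iic u, gaussPDF v * exp (1 * (-u ^ 2 + u * v)) := by
        refine setIntegral_mono_on integrable_gaussPDF.integrableOn
          (integrable_gaussPDF_mul_exp _ _ _).integrableOn measurableSet_Iic fun v hv => ?_
        refine le_mul_of_one_le_right (gaussPDF_nonneg v) (one_le_exp ?_)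
        nlinarith [mem_Iic.1 hv]
    _ ≤ ∫ v, gaussPDF v * exp (1 * (-u ^ 2 + u * v)) :=
        setIntegral_le_integral (integrable_gaussPDF_mul_exp _ _ _)
          (Eventually.of_forall fun v => mul_nonneg (gaussPDF_nonneg v) (exp_pos _).le)
    _ = exp (-u ^ 2 / 2) := by rw [integral_gaussPDF_mul_exp, hexp]

lemma integral_Ioi_gaussPDF_le_exp {u : ℝ} (hu : 0 ≤ u) :
    ∫ v in Ioi u, gaussPDF v ≤ exp (-u ^ 2 / 2) := by
  have h : ∫ v in Ioi u, gaussPDF v = gaussCDF (-u) := by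
    simp only [gaussCDF, ← integral_comp_neg_Ioi, gaussPDF_neg]
  simpa [h] using gaussCDF_le_exp (neg_nonpos.2 hu)

lemma tendsto_exp_neg_sq_div_two_atTop :
    Tendsto (fun u : ℝ => exp (-u ^ 2 / 2)) atTop (nhds 0) :=
  tendsto_exp_atBot.comp <| tendsto_neg_atTop_atBot.comp
    ((tendsto_pow_atTop two_ne_zero).atTop_div_const two_pos) |>.congr fun u => by
      simp [neg_div]

lemma tendsto_gaussCDF_atTop : Tendsto gaussCDF atTop (nhds 1) := by
  refine tendsto_of_tendsto_of_tendsto_of_le_of_le'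
    (by simpa using tendsto_exp_neg_sq_div_two_atTop.const_sub 1)
    tendsto_const_nhds ?_ (Eventually.of_forall gaussCDF_le_one)
  filter_upwards [eventually_ge_atTop 0] with u hu
  linarith [gaussCDF_add_integral_Ioi u, integral_Ioi_gaussPDF_le_exp hu]

lemma log_one_add_le_self {t : ℝ} (ht : 0 ≤ t) : log (1 + t) ≤ t := by
  linarith [log_le_sub_one_of_pos (by linarith : 0 < 1 + t)]

lemma sub_sq_le_log_one_add {t : ℝ} (ht : 0 ≤ t) : t - t ^ 2 ≤ log (1 + t) := by
  have h := one_sub_inv_le_log_of_pos (by linarith : 0 < 1 + t)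
  have h' : t - t ^ 2 ≤ t / (1 + t) := by
    rw [le_div_iff₀ (by linarith)]
    nlinarith [pow_nonneg ht 3]
  rw [show 1 - (1 + t)⁻¹ = t / (1 + t) by field_simp; ring] at h
  linarith

lemma one_add_rpow_le_one_add_mul {t p : ℝ} (ht : 0 ≤ t) (ht1 : t ≤ 1) (hp : 0 ≤ p) :
    (1 + t) ^ p ≤ 1 + (exp p - 1) * t := by
  have hconv := convexOn_exp.2 (mem_univ 0) (mem_univ p) (sub_nonneg.2 ht1) ht (by ring)
  simp only [smul_eq_mul, mul_zero, zero_add, exp_zero, mul_one] at hconv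
  calc (1 + t) ^ p = exp (log (1 + t) * p) := rpow_def_of_pos (by linarith) p
    _ ≤ exp (t * p) := exp_le_exp.2 (mul_le_mul_of_nonneg_right (log_one_add_le_self ht) hp)
    _ ≤ 1 + (exp p - 1) * t := by linarith

lemma one_add_rpow_le_two_rpow_mul {y q : ℝ} (hy : 0 ≤ y) (hq : 0 ≤ q) :
    (1 + y) ^ q ≤ 2 ^ q * (1 + y ^ q) := by
  calc (1 + y) ^ q ≤ (2 * max 1 y) ^ q :=
        rpow_le_rpow (by linarith) (by linarith [le_max_left 1 y, le_max_right 1 y]) hq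
    _ = 2 ^ q * max 1 y ^ q := mul_rpow zero_le_two (by positivity)
    _ ≤ 2 ^ q * (1 + y ^ q) := by
      gcongr
      rcases max_cases 1 y with ⟨h, -⟩ | ⟨h, -⟩ <;> rw [h]
      · simp [rpow_nonneg hy]
      · linarith

noncomputable def Jintegrand (p x : ℝ) : ℝ := (1 + exp x) ^ p * log (1 + exp x)

lemma Jint_eq_integral_Jintegrand (p a b : ℝ) :
    Jint p a b = ∫ v, gaussPDF v * Jintegrand p (a + b * v) := by
  simp only [Jint, Jintegrand, mul_assoc]

lemma Jintegrand_nonneg (p x : ℝ) : 0 ≤ Jintegrand p x :=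
  mul_nonneg (rpow_nonneg (by positivity) p) (log_nonneg (by linarith [exp_pos x]))

lemma continuous_Jintegrand (p : ℝ) : Continuous (Jintegrand p) := by
  have h : Continuous fun x => 1 + exp x := by fun_prop
  exact (h.rpow_const fun x => Or.inl (by positivity)).mul (h.log fun x => by positivity)

lemma exp_sq_le_exp_mul {k x : ℝ} (hk : k ≤ 2) (hx : x ≤ 0) : exp x ^ 2 ≤ exp (k * x) := by
  rw [← exp_nat_mul]
  exact exp_le_exp.2 (by push_cast; nlinarith)

lemma Jintegrand_le_of_nonpos {p k x : ℝ} (hp : 0 ≤ p) (hk : k ≤ 2) (hx : x ≤ 0) :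
    Jintegrand p x ≤ exp x + (exp p - 1) * exp (k * x) := by
  have ht1 : exp x ≤ 1 := exp_le_one_iff.2 hx
  have hp1 : 0 ≤ exp p - 1 := by linarith [one_le_exp hp]
  calc Jintegrand p x ≤ (1 + (exp p - 1) * exp x) * exp x :=
        mul_le_mul (one_add_rpow_le_one_add_mul (exp_pos x).le ht1 hp)
          (log_one_add_le_self (exp_pos x).le) (log_nonneg (by linarith [exp_pos x]))
          (by positivity)
    _ = exp x + (exp p - 1) * exp x ^ 2 := by ring
    _ ≤ exp x + (exp p - 1) * exp (k * x) := by gcongr; exact exp_sq_le_exp_mul hk hx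

lemma exp_sub_exp_le_Jintegrand_of_nonpos {p k x : ℝ} (hp : 0 ≤ p) (hk : k ≤ 2)
    (hx : x ≤ 0) :
    exp x - exp (k * x) ≤ Jintegrand p x := by
  have hlog := log_nonneg (by linarith [exp_pos x] : 1 ≤ 1 + exp x)
  calc exp x - exp (k * x) ≤ log (1 + exp x) := by
        linarith [sub_sq_le_log_one_add (exp_pos x).le, exp_sq_le_exp_mul hk hx]
    _ ≤ Jintegrand p x :=
        le_mul_of_one_le_left hlog (one_le_rpow (by linarith [exp_pos x]) hp)

lemma Jintegrand_le {p q : ℝ} (hp : 0 ≤ p) (hpq : p < q) (x : ℝ) :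
    Jintegrand p x ≤ 2 ^ q / (q - p) * (1 + exp (q * x)) := by
  have h1 : 0 < 1 + exp x := by positivity
  calc Jintegrand p x ≤ (1 + exp x) ^ p * ((1 + exp x) ^ (q - p) / (q - p)) :=
        mul_le_mul_of_nonneg_left (log_le_rpow_div h1.le (by linarith)) (by positivity)
    _ = (1 + exp x) ^ q / (q - p) := by
        rw [mul_div_assoc', ← rpow_add h1, add_sub_cancel]
    _ ≤ 2 ^ q * (1 + exp x ^ q) / (q - p) :=
        div_le_div_of_nonneg_right (one_add_rpow_le_two_rpow_mul (exp_pos x).le (by linarith))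
          (by linarith)
    _ = 2 ^ q / (q - p) * (1 + exp (q * x)) := by
        rw [← exp_mul, mul_comm x]; ring

lemma integrable_gaussPDF_mul_Jintegrand {p : ℝ} (hp : 0 ≤ p) (a b : ℝ) :
    Integrable fun v => gaussPDF v * Jintegrand p (a + b * v) := by
  refine Integrable.mono' ((integrable_gaussPDF.add
    (integrable_gaussPDF_mul_exp a b (p + 1))).const_mul (2 ^ (p + 1) / (p + 1 - p)))
    (integrable_gaussPDF.aestronglyMeasurable.mul
      ((continuous_Jintegrand p).comp (by fun_prop)).aestronglyMeasurable)
    (Eventually.of_forall fun v => ?_)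
  rw [Pi.add_apply, norm_of_nonneg (mul_nonneg (gaussPDF_nonneg v) (Jintegrand_nonneg p _))]
  have := mul_le_mul_of_nonneg_left (Jintegrand_le hp (lt_add_one p) (a + b * v))
    (gaussPDF_nonneg v)
  linarith

section Split

variable {p a b T k q : ℝ}

lemma fExp_sub_sq_div_two (hT : a + b * T = 0) (k : ℝ) :
    fExp a b k - (T - k * b) ^ 2 / 2 = -T ^ 2 / 2 := by
  simp only [fExp]
  linear_combination k * hT

lemma Jint_eq_setIntegral_Iic_add_Ioi (hp : 0 ≤ p) (a b T : ℝ) :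
    Jint p a b = (∫ v in Iic T, gaussPDF v * Jintegrand p (a + b * v)) +
      ∫ v in Ioi T, gaussPDF v * Jintegrand p (a + b * v) := by
  have h := integrable_gaussPDF_mul_Jintegrand hp a b
  rw [Jint_eq_integral_Jintegrand,
    intervalIntegral.integral_Iic_add_Ioi h.integrableOn h.integrableOn]

lemma setIntegral_Iic_Jintegrand_le (hp : 0 ≤ p) (hb : 0 ≤ b) (hT : a + b * T = 0)
    (hk : k ≤ 2) :
    ∫ v in Iic T, gaussPDF v * Jintegrand p (a + b * v) ≤
      exp (fExp a b 1) + (exp p - 1) * exp (fExp a b k) := by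
  calc ∫ v in Iic T, gaussPDF v * Jintegrand p (a + b * v)
      ≤ ∫ v in Iic T, (gaussPDF v * exp (1 * (a + b * v)) +
          (exp p - 1) * (gaussPDF v * exp (k * (a + b * v)))) := by
        refine setIntegral_mono_on (integrable_gaussPDF_mul_Jintegrand hp a b).integrableOn
          ((integrable_gaussPDF_mul_exp a b 1).add
            ((integrable_gaussPDF_mul_exp a b k).const_mul _)).integrableOn
          measurableSet_Iic fun v hv => ?_
        have hx : a + b * v ≤ 0 := by nlinarith [mem_Iic.1 hv]
        have := mul_le_mul_of_nonneg_left (Jintegrand_le_of_nonpos hp hk hx) (gaussPDF_nonneg v)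
        rw [one_mul]
        linarith
    _ = exp (fExp a b 1) * gaussCDF (T - 1 * b) +
          (exp p - 1) * (exp (fExp a b k) * gaussCDF (T - k * b)) := by
        rw [integral_add (integrable_gaussPDF_mul_exp a b 1).integrableOn
          ((integrable_gaussPDF_mul_exp a b k).const_mul _).integrableOn, integral_const_mul,
          setIntegral_Iic_gaussPDF_mul_exp, setIntegral_Iic_gaussPDF_mul_exp]
    _ ≤ exp (fExp a b 1) + (exp p - 1) * exp (fExp a b k) := by
        have hp1 : 0 ≤ exp p - 1 := by linarith [one_le_exp hp]
        gcongr <;> exact mul_le_of_le_one_right (exp_pos _).le (gaussCDF_le_one _)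

lemma le_setIntegral_Iic_Jintegrand (hp : 0 ≤ p) (hb : 0 ≤ b) (hT : a + b * T = 0)
    (hk : k ≤ 2) :
    exp (fExp a b 1) * gaussCDF (T - b) - exp (fExp a b k) ≤
      ∫ v in Iic T, gaussPDF v * Jintegrand p (a + b * v) := by
  calc exp (fExp a b 1) * gaussCDF (T - b) - exp (fExp a b k)
      ≤ exp (fExp a b 1) * gaussCDF (T - 1 * b) -
          exp (fExp a b k) * gaussCDF (T - k * b) := by
        rw [one_mul]
        linarith [mul_le_of_le_one_right (exp_pos (fExp a b k)).le (gaussCDF_le_one (T - k * b))]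
    _ = ∫ v in Iic T, (gaussPDF v * exp (1 * (a + b * v)) -
          gaussPDF v * exp (k * (a + b * v))) := by
        rw [integral_sub (integrable_gaussPDF_mul_exp a b 1).integrableOn
          (integrable_gaussPDF_mul_exp a b k).integrableOn,
          setIntegral_Iic_gaussPDF_mul_exp, setIntegral_Iic_gaussPDF_mul_exp]
    _ ≤ ∫ v in Iic T, gaussPDF v * Jintegrand p (a + b * v) := by
        refine setIntegral_mono_on ((integrable_gaussPDF_mul_exp a b 1).sub
            (integrable_gaussPDF_mul_exp a b k)).integrableOn
          (integrable_gaussPDF_mul_Jintegrand hp a b).integrableOn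
          measurableSet_Iic fun v hv => ?_
        have hx : a + b * v ≤ 0 := by nlinarith [mem_Iic.1 hv]
        rw [one_mul, ← mul_sub]
        exact mul_le_mul_of_nonneg_left (exp_sub_exp_le_Jintegrand_of_nonpos hp hk hx)
          (gaussPDF_nonneg v)

lemma setIntegral_Ioi_Jintegrand_le (hp : 0 ≤ p) (hb : 0 ≤ b) (hT : a + b * T = 0)
    (hpq : p < q) (hqT : q * b ≤ T) :
    ∫ v in Ioi T, gaussPDF v * Jintegrand p (a + b * v) ≤
      2 ^ (q + 1) / (q - p) * exp (-T ^ 2 / 2) := by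
  have hq : 0 < q := by linarith
  calc ∫ v in Ioi T, gaussPDF v * Jintegrand p (a + b * v)
      ≤ ∫ v in Ioi T, 2 ^ (q + 1) / (q - p) * (gaussPDF v * exp (q * (a + b * v))) := by
        refine setIntegral_mono_on (integrable_gaussPDF_mul_Jintegrand hp a b).integrableOn
          ((integrable_gaussPDF_mul_exp a b q).const_mul _).integrableOn
          measurableSet_Ioi fun v hv => ?_
        have hx : 0 ≤ q * (a + b * v) := mul_nonneg hq.le (by nlinarith [mem_Ioi.1 hv])
        have hJ : Jintegrand p (a + b * v) ≤ 2 ^ (q + 1) / (q - p) * exp (q * (a + b * v)) := by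
          calc Jintegrand p (a + b * v) ≤ 2 ^ q / (q - p) * (1 + exp (q * (a + b * v))) :=
                Jintegrand_le hp hpq _
            _ ≤ 2 ^ q / (q - p) * (2 * exp (q * (a + b * v))) := by
                gcongr
                linarith [one_le_exp hx]
            _ = 2 ^ (q + 1) / (q - p) * exp (q * (a + b * v)) := by
                rw [rpow_add_one two_ne_zero]; ring
        have := mul_le_mul_of_nonneg_left hJ (gaussPDF_nonneg v)
        linarith
    _ = 2 ^ (q + 1) / (q - p) * (exp (fExp a b q) * ∫ v in Ioi (T - q * b), gaussPDF v) := by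
        rw [integral_const_mul, setIntegral_Ioi_gaussPDF_mul_exp]
    _ ≤ 2 ^ (q + 1) / (q - p) * (exp (fExp a b q) * exp (-(T - q * b) ^ 2 / 2)) := by
        have : 0 < q - p := by linarith
        gcongr
        exact integral_Ioi_gaussPDF_le_exp (by linarith)
    _ = 2 ^ (q + 1) / (q - p) * exp (-T ^ 2 / 2) := by
        rw [← exp_add, ← fExp_sub_sq_div_two hT q]
        ring_nf

lemma gaussCDF_sub_le_Jint_mul_exp (hp : 0 ≤ p) (hb : 0 ≤ b) (hT : a + b * T = 0)
    (hk : k ≤ 2) :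
    gaussCDF (T - b) - exp (fExp a b k - fExp a b 1) ≤ Jint p a b * exp (-fExp a b 1) := by
  have hIoi : 0 ≤ ∫ v in Ioi T, gaussPDF v * Jintegrand p (a + b * v) :=
    setIntegral_nonneg measurableSet_Ioi fun v _ =>
      mul_nonneg (gaussPDF_nonneg v) (Jintegrand_nonneg p _)
  calc gaussCDF (T - b) - exp (fExp a b k - fExp a b 1)
      = (exp (fExp a b 1) * gaussCDF (T - b) - exp (fExp a b k)) * exp (-fExp a b 1) := by
        rw [sub_mul, mul_right_comm, ← exp_add, ← exp_add, add_neg_cancel, exp_zero, one_mul,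
          sub_eq_add_neg (fExp a b k)]
    _ ≤ Jint p a b * exp (-fExp a b 1) := by
        gcongr
        rw [Jint_eq_setIntegral_Iic_add_Ioi hp a b T]
        linarith [le_setIntegral_Iic_Jintegrand hp hb hT hk]

lemma Jint_mul_exp_le (hp : 0 ≤ p) (hb : 0 ≤ b) (hT : a + b * T = 0) (hk : k ≤ 2)
    (hpq : p < q) (hqT : q * b ≤ T) :
    Jint p a b * exp (-fExp a b 1) ≤ 1 + (exp p - 1) * exp (fExp a b k - fExp a b 1) +
      2 ^ (q + 1) / (q - p) * exp (-(T - b) ^ 2 / 2) := by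
  have hT1 := fExp_sub_sq_div_two hT 1
  rw [one_mul] at hT1
  calc Jint p a b * exp (-fExp a b 1)
      ≤ (exp (fExp a b 1) + (exp p - 1) * exp (fExp a b k) +
          2 ^ (q + 1) / (q - p) * exp (-T ^ 2 / 2)) * exp (-fExp a b 1) := by
        gcongr
        rw [Jint_eq_setIntegral_Iic_add_Ioi hp a b T]
        linarith [setIntegral_Iic_Jintegrand_le hp hb hT hk,
          setIntegral_Ioi_Jintegrand_le hp hb hT hpq hqT]
    _ = 1 + (exp p - 1) * exp (fExp a b k - fExp a b 1) +
          2 ^ (q + 1) / (q - p) * exp (-(T - b) ^ 2 / 2) := by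
        simp only [add_mul, mul_assoc, ← exp_add, ← hT1, add_neg_cancel, exp_zero,
          ← sub_eq_add_neg]
        ring_nf

end Split

section Growth

variable {α : Type*} {l : Filter α} {f g : α → ℝ} {L : ℝ}

lemma tendsto_atTop_of_tendsto_div (hL : 0 < L)
    (hg : Tendsto g l atTop) (hfg : Tendsto (fun x => f x / g x) l (nhds L)) :
    Tendsto f l atTop :=
  (hfg.pos_mul_atTop hL hg).congr' <| by
    filter_upwards [hg.eventually_gt_atTop 0] with x hx
    exact div_mul_cancel₀ (f x) hx.ne'

lemma tendsto_atBot_of_tendsto_div (hL : L < 0)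
    (hg : Tendsto g l atTop) (hfg : Tendsto (fun x => f x / g x) l (nhds L)) :
    Tendsto f l atBot := by
  have h := tendsto_atTop_of_tendsto_div (neg_pos.2 hL) hg
    (hfg.neg.congr fun x => (neg_div _ _).symm)
  simpa only [Function.comp_def, neg_neg] using tendsto_neg_atTop_atBot.comp h

end Growth

section Sequences

variable {A B : ℕ → ℝ} {A₂ B₁ : ℝ}

lemma eventually_pos_of_tendsto_div_natCast
    (hB : Tendsto (fun N : ℕ => B N / N) atTop (nhds B₁)) (hB₁ : 0 < B₁) :
    ∀ᶠ N in atTop, 0 < B N :=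
  (tendsto_atTop_of_tendsto_div hB₁ tendsto_natCast_atTop_atTop hB).eventually_gt_atTop 0

lemma tendsto_neg_div_sub_mul_atTop {q : ℝ}
    (hA : Tendsto (fun N : ℕ => A N / (N : ℝ) ^ 2) atTop (nhds A₂))
    (hB : Tendsto (fun N : ℕ => B N / N) atTop (nhds B₁)) (hB₁ : 0 < B₁)
    (hq : q < -A₂ / B₁ ^ 2) :
    Tendsto (fun N : ℕ => -A N / B N - q * B N) atTop atTop := by
  have hL : 0 < -A₂ / B₁ - q * B₁ := by
    rw [lt_div_iff₀ (by positivity)] at hq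
    rw [sub_pos, lt_div_iff₀ hB₁]
    linarith
  refine tendsto_atTop_of_tendsto_div hL tendsto_natCast_atTop_atTop <|
    (hA.neg.div hB hB₁.ne').sub (hB.const_mul q) |>.congr' ?_
  filter_upwards [eventually_ne_atTop 0, eventually_pos_of_tendsto_div_natCast hB hB₁]
    with N hN hBN
  have : (N : ℝ) ≠ 0 := Nat.cast_ne_zero.2 hN
  simp only [Pi.div_apply]
  field_simp

lemma tendsto_exp_fExp_sub_fExp_one {k : ℝ}
    (hA : Tendsto (fun N : ℕ => A N / (N : ℝ) ^ 2) atTop (nhds A₂))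
    (hB : Tendsto (fun N : ℕ => B N / N) atTop (nhds B₁)) (hB₁ : 0 < B₁) (hk : 1 < k)
    (hkA : (k + 1) / 2 < -A₂ / B₁ ^ 2) :
    Tendsto (fun N => exp (fExp (A N) (B N) k - fExp (A N) (B N) 1)) atTop (nhds 0) := by
  have hL : (k - 1) * (A₂ + (k + 1) / 2 * B₁ ^ 2) < 0 := by
    rw [lt_div_iff₀ (by positivity)] at hkA
    exact mul_neg_of_pos_of_neg (by linarith) (by linarith)
  refine tendsto_exp_atBot.comp <| tendsto_atBot_of_tendsto_div hL
    ((tendsto_pow_atTop two_ne_zero).comp tendsto_natCast_atTop_atTop) <|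
    ((hA.add ((hB.pow 2).const_mul ((k + 1) / 2))).const_mul (k - 1)).congr fun N => ?_
  simp only [fExp, Function.comp_apply, div_pow]
  ring

end Sequences

/-- Last case of Proposition S2: for `p ≥ 0` and `-A₂/B₁² > max(p, 1)`,
`J_p(A_N, B_N) ≈ e^{f_N(1)}` at leading order. -/
theorem Jint_asymptotics_last (p A₂ B₁ : ℝ) (hp : 0 ≤ p) (A B : ℕ → ℝ)
    (hA : Tendsto (fun N : ℕ => A N / (N : ℝ) ^ 2) atTop (nhds A₂))
    (hB : Tendsto (fun N : ℕ => B N / (N : ℝ)) atTop (nhds B₁))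
    (hB₁ : 0 < B₁) (h1 : -A₂ / B₁ ^ 2 > max p 1) :
    Tendsto (fun N : ℕ => Jint p (A N) (B N) * Real.exp (-(fExp (A N) (B N) 1)))
      atTop (nhds 1) := by
  have hc1 : 1 < -A₂ / B₁ ^ 2 := (le_max_right p 1).trans_lt h1
  obtain ⟨q, hpq, hqc⟩ := exists_between ((le_max_left p 1).trans_lt h1)
  obtain ⟨k, hk1, hk⟩ := exists_between (lt_min one_lt_two hc1)
  have hk2 : k ≤ 2 := hk.le.trans (min_le_left 2 _)
  have hBpos := eventually_pos_of_tendsto_div_natCast hB hB₁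
  have hAB : ∀ᶠ N in atTop, A N + B N * (-A N / B N) = 0 := by
    filter_upwards [hBpos] with N hN
    field_simp
    ring
  have hu : Tendsto (fun N => -A N / B N - B N) atTop atTop := by
    simpa using tendsto_neg_div_sub_mul_atTop hA hB hB₁ hc1
  have hqT := (tendsto_neg_div_sub_mul_atTop hA hB hB₁ hqc).eventually_ge_atTop 0
  have hW := tendsto_exp_fExp_sub_fExp_one hA hB hB₁ hk1
    (by linarith [hk.trans_le (min_le_right 2 _)])
  refine tendsto_of_tendsto_of_tendsto_of_le_of_le'
    (g := fun N => gaussCDF (-A N / B N - B N) - exp (fExp (A N) (B N) k - fExp (A N) (B N) 1))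
    (h := fun N => 1 + (exp p - 1) * exp (fExp (A N) (B N) k - fExp (A N) (B N) 1) +
      2 ^ (q + 1) / (q - p) * exp (-(-A N / B N - B N) ^ 2 / 2)) ?_ ?_ ?_ ?_
  · simpa using (tendsto_gaussCDF_atTop.comp hu).sub hW
  · simpa using ((hW.const_mul (exp p - 1)).const_add 1).add
      ((tendsto_exp_neg_sq_div_two_atTop.comp hu).const_mul (2 ^ (q + 1) / (q - p)))
  · filter_upwards [hBpos, hAB] with N hb hT
    exact gaussCDF_sub_le_Jint_mul_exp hp hb.le hT hk2
  · filter_upwards [hBpos, hAB, hqT] with N hb hT hq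
    exact Jint_mul_exp_le hp hb.le hT hk2 hpq (by linarith)
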